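/- The VH-curvature component (η, X) ↦ Curv(η^V, X^H) of the linearized connection D vanishes identically if and only if there exists a linear connection ∇ on the vector bundle π : E → M such that D is the pullback of ∇ by π; in that case Curv^∇(X,Y)σ = Curv(X^H, Y^H)σ for all X, Y ∈ 𝔛(M), σ ∈ Γ(E). -/

import Mathlib

noncomputable section

/-- Total space of the (locally trivialized) vector bundle `π : E = ℝⁿ × ℝᵐ → M = ℝⁿ`. -/
abbrev EE (n m : ℕ) := (Fin n → ℝ) × (Fin m → ℝ)

/-- The linearized covariant derivative `D_U s` on the pullback bundle `π*E → E` of the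
nonlinear connection with coefficients `Γ` (so `H_i = ∂/∂xⁱ - Γᴬᵢ ∂/∂uᴬ`); for a vector field
`U` on `E` and a section `s` of `π*E`, `D_U s = fderiv s (U) + Σᵢ Uⁱ (∂Γᵢ/∂u) (s)`. -/
def Dlin {n m : ℕ} (Γ : Fin n → EE n m → (Fin m → ℝ))
    (U : EE n m → EE n m) (s : EE n m → (Fin m → ℝ)) (p : EE n m) : Fin m → ℝ :=
  fderiv ℝ s p (U p) + ∑ i, (U p).1 i • fderiv ℝ (fun u => Γ i (p.1, u)) p.2 (s p)

/-- Vertical lift of a section `η` of `π*E`. -/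
def vl {n m : ℕ} (η : EE n m → (Fin m → ℝ)) (p : EE n m) : EE n m := (0, η p)

/-- Horizontal lift of a vector field `X` along `π` with respect to the nonlinear
connection `Γ`. -/
def hl {n m : ℕ} (Γ : Fin n → EE n m → (Fin m → ℝ)) (X : EE n m → (Fin n → ℝ))
    (p : EE n m) : EE n m := (X p, -(∑ i, X p i • Γ i p))

/-- Lie bracket of vector fields on `E`. -/
def lieBr {n m : ℕ} (U W : EE n m → EE n m) (p : EE n m) : EE n m :=
  fderiv ℝ W p (U p) - fderiv ℝ U p (W p)

/-- Curvature tensor of the linearized connection `D`. -/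
def Curv {n m : ℕ} (Γ : Fin n → EE n m → (Fin m → ℝ)) (U W : EE n m → EE n m)
    (s : EE n m → (Fin m → ℝ)) (p : EE n m) : Fin m → ℝ :=
  Dlin Γ U (Dlin Γ W s) p - Dlin Γ W (Dlin Γ U s) p - Dlin Γ (lieBr U W) s p

/-- Connector (vertical projection) of the nonlinear connection. -/
def kc {n m : ℕ} (Γ : Fin n → EE n m → (Fin m → ℝ)) (W : EE n m → EE n m)
    (p : EE n m) : Fin m → ℝ :=
  (W p).2 + ∑ i, (W p).1 i • Γ i p

/-- Covariant derivative of a linear connection `∇` on `E → M` with coefficient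
matrices `C i x`. -/
def nablaB {n m : ℕ} (C : Fin n → (Fin n → ℝ) → ((Fin m → ℝ) →L[ℝ] (Fin m → ℝ)))
    (X : (Fin n → ℝ) → (Fin n → ℝ)) (σ : (Fin n → ℝ) → (Fin m → ℝ)) (x : Fin n → ℝ) :
    Fin m → ℝ :=
  fderiv ℝ σ x (X x) + ∑ i, X x i • C i x (σ x)

/-- Lie bracket of vector fields on the base `M`. -/
def lieBase {n : ℕ} (X Y : (Fin n → ℝ) → (Fin n → ℝ)) (x : Fin n → ℝ) : Fin n → ℝ :=
  fderiv ℝ Y x (X x) - fderiv ℝ X x (Y x)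

/-- Curvature tensor of the linear connection `∇`. -/
def CurvNabla {n m : ℕ} (C : Fin n → (Fin n → ℝ) → ((Fin m → ℝ) →L[ℝ] (Fin m → ℝ)))
    (X Y : (Fin n → ℝ) → (Fin n → ℝ)) (σ : (Fin n → ℝ) → (Fin m → ℝ)) (x : Fin n → ℝ) :
    Fin m → ℝ :=
  nablaB C X (nablaB C Y σ) x - nablaB C Y (nablaB C X σ) x - nablaB C (lieBase X Y) σ x

/-! In the trivialization, `D = d + ω` with connection form `ω q w = ∑ i, wⁱ • ∂ᵤΓᵢ(q)`, and its
curvature is `dω + ω ∧ ω`. Since `ω` kills vertical vectors, this collapses to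
`Curv(η^V, X^H) s = ∑ i, Xⁱ • (∂ᵤ ∂ᵤΓᵢ)(η, s)`, which vanishes for all data iff every `∂ᵤΓᵢ` is
constant along the fibres, i.e. iff `D` is the pullback of the linear connection with
coefficients `Cᵢ x = ∂ᵤΓᵢ(x, 0)`. On basic sections `D_U (σ ∘ π)` only depends on `π_* U`, and
`π_* [X^H, Y^H] = [X, Y]`, which gives the curvature identity. -/

open ContinuousLinearMap

section TrivialBundle

variable {E F G : Type*} [NormedAddCommGroup E] [NormedSpace ℝ E] [NormedAddCommGroup F]
  [NormedSpace ℝ F] [NormedAddCommGroup G] [NormedSpace ℝ G]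

theorem fderiv_comp_prodMk_right_apply {f : E × F → G} {x : E} {y : F}
    (hf : DifferentiableAt ℝ f (x, y)) (v : F) :
    fderiv ℝ (fun y' => f (x, y')) y v = fderiv ℝ f (x, y) (0, v) := by
  have h : HasFDerivAt (fun y' => f (x, y')) ((fderiv ℝ f (x, y)).comp (inr ℝ E F)) y :=
    hf.hasFDerivAt.comp y (hasFDerivAt_prodMk_right x y)
  rw [h.fderiv]
  rfl

theorem forall_fderiv_apply_zero_prod_eq_zero_iff {f : E × F → G} (hf : Differentiable ℝ f) :
    (∀ q v, fderiv ℝ f q (0, v) = 0) ↔ ∀ x y, f (x, y) = f (x, 0) := by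
  constructor
  · intro h x y
    refine is_const_of_fderiv_eq_zero (f := fun y' => f (x, y'))
      (hf.comp (differentiable_const x |>.prodMk differentiable_id)) (fun y' => ?_) y 0
    ext v
    rw [fderiv_comp_prodMk_right_apply (hf _), h]
    rfl
  · rintro h ⟨x, y⟩ v
    have hconst : (fun y' => f (x, y')) = fun _ => f (x, 0) := funext (h x)
    rw [← fderiv_comp_prodMk_right_apply (hf _), hconst, fderiv_const_apply, zero_apply]

theorem fderiv_comp_fst_apply {g : E → G} {p : E × F} (hg : DifferentiableAt ℝ g p.1)
    (w : E × F) : fderiv ℝ (fun q => g q.1) p w = fderiv ℝ g p.1 w.1 := by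
  have h : HasFDerivAt (fun q => g q.1) ((fderiv ℝ g p.1).comp (fst ℝ E F)) p :=
    hg.hasFDerivAt.comp p hasFDerivAt_fst
  rw [h.fderiv]
  rfl

def covDerivOfForm (ω : E → E →L[ℝ] F →L[ℝ] F) (U : E → E) (s : E → F) (p : E) : F :=
  fderiv ℝ s p (U p) + ω p (U p) (s p)

variable {ω : E → E →L[ℝ] F →L[ℝ] F} {U W : E → E} {s : E → F} {p : E}

theorem fderiv_covDerivOfForm_apply (hω : DifferentiableAt ℝ ω p)
    (hW : DifferentiableAt ℝ W p) (hs : ContDiffAt ℝ 2 s p) (v : E) :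
    fderiv ℝ (covDerivOfForm ω W s) p v =
      fderiv ℝ (fderiv ℝ s) p v (W p) + fderiv ℝ s p (fderiv ℝ W p v)
        + (fderiv ℝ ω p v (W p) (s p) + ω p (fderiv ℝ W p v) (s p)
          + ω p (W p) (fderiv ℝ s p v)) := by
  have hs' : DifferentiableAt ℝ (fderiv ℝ s) p :=
    (hs.fderiv_right (m := 1) (by norm_num)).differentiableAt (by norm_num)
  have hsd : DifferentiableAt ℝ s p := hs.differentiableAt (by norm_num)
  have h : HasFDerivAt (covDerivOfForm ω W s) _ p :=
    (hs'.hasFDerivAt.clm_apply hW.hasFDerivAt).add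
      ((hω.hasFDerivAt.clm_apply hW.hasFDerivAt).clm_apply hsd.hasFDerivAt)
  rw [h.fderiv]
  simp only [add_apply, comp_apply, flip_apply]
  abel

theorem covDerivOfForm_curvature_eq (hω : DifferentiableAt ℝ ω p) (hU : DifferentiableAt ℝ U p)
    (hW : DifferentiableAt ℝ W p) (hs : ContDiffAt ℝ 2 s p) :
    covDerivOfForm ω U (covDerivOfForm ω W s) p - covDerivOfForm ω W (covDerivOfForm ω U s) p
        - covDerivOfForm ω (fun q => fderiv ℝ W q (U q) - fderiv ℝ U q (W q)) s p =
      fderiv ℝ ω p (U p) (W p) (s p) - fderiv ℝ ω p (W p) (U p) (s p)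
        + (ω p (U p) (ω p (W p) (s p)) - ω p (W p) (ω p (U p) (s p))) := by
  have hsymm := (hs.isSymmSndFDerivAt (by simp)) (U p) (W p)
  simp only [covDerivOfForm] at hsymm ⊢
  rw [fderiv_covDerivOfForm_apply hω hW hs, fderiv_covDerivOfForm_apply hω hU hs, hsymm]
  simp only [map_sub, map_add, sub_apply]
  abel

end TrivialBundle

section LinearizedConnection

variable {n m : ℕ} {Γ : Fin n → EE n m → (Fin m → ℝ)}

def fiberDeriv (Γ : Fin n → EE n m → (Fin m → ℝ)) (i : Fin n) (q : EE n m) :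
    (Fin m → ℝ) →L[ℝ] (Fin m → ℝ) :=
  (fderiv ℝ (Γ i) q).comp (inr ℝ (Fin n → ℝ) (Fin m → ℝ))

theorem fderiv_fiber_eq_fiberDeriv {i : Fin n} {p : EE n m} (hΓ : DifferentiableAt ℝ (Γ i) p) :
    fderiv ℝ (fun u => Γ i (p.1, u)) p.2 = fiberDeriv Γ i p := by
  ext1 v
  exact fderiv_comp_prodMk_right_apply hΓ v

theorem ContDiff.fiberDeriv {i : Fin n} {k l : WithTop ℕ∞} (hΓ : ContDiff ℝ l (Γ i))
    (hkl : k + 1 ≤ l) : ContDiff ℝ k (fiberDeriv Γ i) :=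
  (hΓ.fderiv_right hkl).clm_comp contDiff_const

def connForm (Γ : Fin n → EE n m → (Fin m → ℝ)) (q : EE n m) :
    EE n m →L[ℝ] (Fin m → ℝ) →L[ℝ] (Fin m → ℝ) :=
  ∑ i, ((proj i).comp (fst ℝ (Fin n → ℝ) (Fin m → ℝ))).smulRight (fiberDeriv Γ i q)

theorem connForm_apply (q w : EE n m) : connForm Γ q w = ∑ i, w.1 i • fiberDeriv Γ i q := by
  simp [connForm]

theorem Dlin_eq_covDerivOfForm (hΓ : ∀ i, Differentiable ℝ (Γ i)) :
    Dlin Γ = covDerivOfForm (connForm Γ) := by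
  funext U s p
  simp [Dlin, covDerivOfForm, connForm_apply, fderiv_fiber_eq_fiberDeriv (hΓ _ p)]

theorem hasFDerivAt_connForm (hΓ : ∀ i, ContDiff ℝ 2 (Γ i)) (p : EE n m) :
    HasFDerivAt (connForm Γ) (∑ i, (smulRightL ℝ (EE n m) ((Fin m → ℝ) →L[ℝ] (Fin m → ℝ))
      ((proj i).comp (fst ℝ _ _))).comp (fderiv ℝ (fiberDeriv Γ i) p)) p := by
  have h : ∀ i, DifferentiableAt ℝ (fiberDeriv Γ i) p := fun i =>
    ((hΓ i).fiberDeriv (k := 1) (by norm_num)).differentiable (by norm_num) p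
  have hsum := HasFDerivAt.fun_sum (u := Finset.univ)
    (A := fun i q => smulRightL ℝ (EE n m) ((Fin m → ℝ) →L[ℝ] (Fin m → ℝ))
      ((proj i).comp (fst ℝ _ _)) (fiberDeriv Γ i q)) fun i _ =>
    (smulRightL ℝ (EE n m) ((Fin m → ℝ) →L[ℝ] (Fin m → ℝ))
      ((proj i).comp (fst ℝ _ _))).hasFDerivAt.comp p (h i).hasFDerivAt
  exact hsum

theorem fderiv_connForm_apply (hΓ : ∀ i, ContDiff ℝ 2 (Γ i)) (p v w : EE n m) :
    fderiv ℝ (connForm Γ) p v w = ∑ i, w.1 i • fderiv ℝ (fiberDeriv Γ i) p v := by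
  simp [(hasFDerivAt_connForm hΓ p).fderiv]

theorem Curv_eq_structure_equation (hΓ : ∀ i, ContDiff ℝ 2 (Γ i)) {U W : EE n m → EE n m}
    {s : EE n m → (Fin m → ℝ)} {p : EE n m} (hU : DifferentiableAt ℝ U p)
    (hW : DifferentiableAt ℝ W p) (hs : ContDiffAt ℝ 2 s p) :
    Curv Γ U W s p =
      fderiv ℝ (connForm Γ) p (U p) (W p) (s p) - fderiv ℝ (connForm Γ) p (W p) (U p) (s p)
        + (connForm Γ p (U p) (connForm Γ p (W p) (s p))
          - connForm Γ p (W p) (connForm Γ p (U p) (s p))) := by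
  rw [Curv, Dlin_eq_covDerivOfForm fun i => (hΓ i).differentiable (by norm_num)]
  exact covDerivOfForm_curvature_eq (hasFDerivAt_connForm hΓ p).differentiableAt hU hW hs

theorem DifferentiableAt.hl {X : EE n m → (Fin n → ℝ)} {p : EE n m}
    (hΓ : ∀ i, DifferentiableAt ℝ (Γ i) p) (hX : DifferentiableAt ℝ X p) :
    DifferentiableAt ℝ (hl Γ X) p :=
  hX.prodMk (DifferentiableAt.fun_sum fun i _ => (differentiableAt_pi.1 hX i).smul (hΓ i)).neg

theorem Curv_vl_hl (hΓ : ∀ i, ContDiff ℝ 2 (Γ i)) {η s : EE n m → (Fin m → ℝ)}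
    {X : EE n m → (Fin n → ℝ)} {p : EE n m} (hη : DifferentiableAt ℝ η p)
    (hX : DifferentiableAt ℝ X p) (hs : ContDiffAt ℝ 2 s p) :
    Curv Γ (vl η) (hl Γ X) s p = ∑ i, X p i • fderiv ℝ (fiberDeriv Γ i) p (0, η p) (s p) := by
  have hV : DifferentiableAt ℝ (vl η) p := (differentiableAt_const 0).prodMk hη
  have hH : DifferentiableAt ℝ (hl Γ X) p :=
    hX.hl fun i => (hΓ i).differentiable (by norm_num) p
  rw [Curv_eq_structure_equation hΓ hV hH hs]
  simp [vl, hl, fderiv_connForm_apply hΓ, connForm_apply]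

theorem Curv_vl_hl_eq_zero_iff (hΓ : ∀ i, ContDiff ℝ 2 (Γ i)) :
    (∀ (η s : EE n m → (Fin m → ℝ)) (X : EE n m → (Fin n → ℝ)),
        ContDiff ℝ (⊤ : ℕ∞) η → ContDiff ℝ (⊤ : ℕ∞) s → ContDiff ℝ (⊤ : ℕ∞) X →
        ∀ p : EE n m, Curv Γ (vl η) (hl Γ X) s p = 0) ↔
      ∀ i q v, fderiv ℝ (fiberDeriv Γ i) q (0, v) = 0 := by
  constructor
  · intro h i q v
    ext1 w
    -- constant data with `X = Pi.single i 1` isolate the `i`-th term of `Curv_vl_hl`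
    have := h (fun _ => v) (fun _ => w) (fun _ => Pi.single i 1) contDiff_const contDiff_const
      contDiff_const q
    rw [Curv_vl_hl hΓ (differentiableAt_const _) (differentiableAt_const _)
      contDiffAt_const] at this
    simpa [Pi.single_apply] using this
  · intro h η s X hη hs hX p
    rw [Curv_vl_hl hΓ (hη.differentiable (by simp) p) (hX.differentiable (by simp) p)
      ((hs.of_le (WithTop.coe_le_coe.2 le_top)).contDiffAt)]
    simp [h]

theorem exists_basic_fiberDeriv_iff (hΓ : ∀ i, ContDiff ℝ 2 (Γ i)) :
    (∃ C : Fin n → (Fin n → ℝ) → ((Fin m → ℝ) →L[ℝ] (Fin m → ℝ)),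
        ∀ i (p : EE n m), fderiv ℝ (fun u => Γ i (p.1, u)) p.2 = C i p.1) ↔
      ∀ i q v, fderiv ℝ (fiberDeriv Γ i) q (0, v) = 0 := by
  have hfib : ∀ i (p : EE n m), fderiv ℝ (fun u => Γ i (p.1, u)) p.2 = fiberDeriv Γ i p :=
    fun i p => fderiv_fiber_eq_fiberDeriv ((hΓ i).differentiable (by norm_num) p)
  have hdiff : ∀ i, Differentiable ℝ (fiberDeriv Γ i) := fun i =>
    ((hΓ i).fiberDeriv (k := 1) (by norm_num)).differentiable (by norm_num)
  refine (exists_congr fun C => forall_congr' fun i => forall_congr' fun p => by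
    rw [hfib]).trans (Iff.trans ?_ (forall_congr' fun i =>
      (forall_fderiv_apply_zero_prod_eq_zero_iff (hdiff i)).symm))
  constructor
  · rintro ⟨C, hC⟩ i x y
    rw [hC i (x, y), hC i (x, 0)]
  · intro h
    exact ⟨fun i x => fiberDeriv Γ i (x, 0), fun i p => h i p.1 p.2⟩

theorem fst_fderiv_hl {X : EE n m → (Fin n → ℝ)} {p : EE n m}
    (hΓ : ∀ i, DifferentiableAt ℝ (Γ i) p) (hX : DifferentiableAt ℝ X p) (w : EE n m) :
    (fderiv ℝ (hl Γ X) p w).1 = fderiv ℝ X p w :=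
  (congrArg (· w) (fderiv.fst (hX.hl hΓ))).symm

theorem fst_lieBr_hl (hΓ : ∀ i, Differentiable ℝ (Γ i)) {X Y : (Fin n → ℝ) → (Fin n → ℝ)}
    (hX : Differentiable ℝ X) (hY : Differentiable ℝ Y) (p : EE n m) :
    (lieBr (hl Γ fun q => X q.1) (hl Γ fun q => Y q.1) p).1 = lieBase X Y p.1 := by
  have hlift : ∀ Z : (Fin n → ℝ) → (Fin n → ℝ), Differentiable ℝ Z → ∀ w,
      (fderiv ℝ (hl Γ fun q => Z q.1) p w).1 = fderiv ℝ Z p.1 w.1 := fun Z hZ w => by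
    rw [fst_fderiv_hl (X := fun q => Z q.1) (fun i => hΓ i p)
      ((hZ p.1).comp p differentiableAt_fst), fderiv_comp_fst_apply (hZ _)]
  rw [lieBr, Prod.fst_sub, hlift Y hY, hlift X hX]
  rfl

theorem Dlin_comp_fst {C : Fin n → (Fin n → ℝ) → ((Fin m → ℝ) →L[ℝ] (Fin m → ℝ))}
    (hC : ∀ i (p : EE n m), fderiv ℝ (fun u => Γ i (p.1, u)) p.2 = C i p.1)
    (U : EE n m → EE n m) {σ : (Fin n → ℝ) → (Fin m → ℝ)} {p : EE n m}
    (hσ : DifferentiableAt ℝ σ p.1) :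
    Dlin Γ U (fun q => σ q.1) p = nablaB C (fun _ => (U p).1) σ p.1 := by
  simp only [Dlin, nablaB, hC, fderiv_comp_fst_apply hσ]

theorem differentiable_nablaB {C : Fin n → (Fin n → ℝ) → ((Fin m → ℝ) →L[ℝ] (Fin m → ℝ))}
    (hC : ∀ i, Differentiable ℝ (C i)) {Y : (Fin n → ℝ) → (Fin n → ℝ)}
    {σ : (Fin n → ℝ) → (Fin m → ℝ)} (hY : Differentiable ℝ Y) (hσ : ContDiff ℝ 2 σ) :
    Differentiable ℝ (nablaB C Y σ) :=
  ((hσ.fderiv_right (m := 1) (by norm_num)).differentiable (by norm_num)).clm_apply hY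
    |>.add <| Differentiable.fun_sum fun i _ =>
      (differentiable_pi.1 hY i).smul ((hC i).clm_apply (hσ.differentiable (by norm_num)))

theorem CurvNabla_eq_Curv (hΓ : ∀ i, ContDiff ℝ 2 (Γ i))
    {C : Fin n → (Fin n → ℝ) → ((Fin m → ℝ) →L[ℝ] (Fin m → ℝ))}
    (hC : ∀ i (p : EE n m), fderiv ℝ (fun u => Γ i (p.1, u)) p.2 = C i p.1)
    {X Y : (Fin n → ℝ) → (Fin n → ℝ)} {σ : (Fin n → ℝ) → (Fin m → ℝ)}
    (hX : Differentiable ℝ X) (hY : Differentiable ℝ Y) (hσ : ContDiff ℝ 2 σ) (p : EE n m) :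
    CurvNabla C X Y σ p.1
      = Curv Γ (hl Γ fun q => X q.1) (hl Γ fun q => Y q.1) (fun q => σ q.1) p := by
  have hΓd : ∀ i, Differentiable ℝ (Γ i) := fun i => (hΓ i).differentiable (by norm_num)
  have hCd : ∀ i, Differentiable ℝ (C i) := fun i => by
    have hCi : C i = fun x => fiberDeriv Γ i (x, 0) := funext fun x => by
      rw [← hC i (x, 0), fderiv_fiber_eq_fiberDeriv (hΓd i _)]
    rw [hCi]
    exact (((hΓ i).fiberDeriv (k := 1) (by norm_num)).differentiable (by norm_num)).comp
      (differentiable_id.prodMk (differentiable_const 0))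
  have hσd : Differentiable ℝ σ := hσ.differentiable (by norm_num)
  have hbasic : ∀ Z : (Fin n → ℝ) → (Fin n → ℝ),
      Dlin Γ (hl Γ fun q => Z q.1) (fun q => σ q.1) = fun q => nablaB C Z σ q.1 :=
    fun Z => funext fun q => Dlin_comp_fst hC _ (hσd _)
  rw [Curv, hbasic, hbasic, Dlin_comp_fst hC _ (differentiable_nablaB hCd hY hσ _),
    Dlin_comp_fst hC _ (differentiable_nablaB hCd hX hσ _), Dlin_comp_fst hC _ (hσd _),
    fst_lieBr_hl hΓd hX hY]
  rfl

end LinearizedConnection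

/-- The VH-component `(η, X) ↦ Curv(η^V, X^H)` of the curvature of the
linearized connection `D` vanishes identically iff there is a linear connection `∇` on
`E → M` (with coefficients `C`) such that `D` is the pullback of `∇` by `π`; in that case
`Curv^∇(X,Y)σ = Curv(X^H,Y^H)σ` for basic data. -/
theorem curvature_VH_vanishes_iff_pullback {n m : ℕ}
    (Γ : Fin n → EE n m → (Fin m → ℝ)) (hΓ : ∀ i, ContDiff ℝ (⊤ : ℕ∞) (Γ i)) :
    ((∀ (η s : EE n m → (Fin m → ℝ)) (X : EE n m → (Fin n → ℝ)),
        ContDiff ℝ (⊤ : ℕ∞) η → ContDiff ℝ (⊤ : ℕ∞) s → ContDiff ℝ (⊤ : ℕ∞) X →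
        ∀ p : EE n m, Curv Γ (vl η) (hl Γ X) s p = 0) ↔
      (∃ C : Fin n → (Fin n → ℝ) → ((Fin m → ℝ) →L[ℝ] (Fin m → ℝ)),
        ∀ (i : Fin n) (p : EE n m),
          fderiv ℝ (fun u => Γ i (p.1, u)) p.2 = C i p.1)) ∧
    (∀ C : Fin n → (Fin n → ℝ) → ((Fin m → ℝ) →L[ℝ] (Fin m → ℝ)),
      (∀ (i : Fin n) (p : EE n m), fderiv ℝ (fun u => Γ i (p.1, u)) p.2 = C i p.1) →
      ∀ (X Y : (Fin n → ℝ) → (Fin n → ℝ)) (σ : (Fin n → ℝ) → (Fin m → ℝ)),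
        ContDiff ℝ (⊤ : ℕ∞) X → ContDiff ℝ (⊤ : ℕ∞) Y → ContDiff ℝ (⊤ : ℕ∞) σ →
        ∀ p : EE n m,
          CurvNabla C X Y σ p.1
            = Curv Γ (hl Γ fun q => X q.1) (hl Γ fun q => Y q.1) (fun q => σ q.1) p) := by
  have h2 : (2 : WithTop ℕ∞) ≤ (⊤ : ℕ∞) := WithTop.coe_le_coe.2 le_top
  have hΓ2 : ∀ i, ContDiff ℝ 2 (Γ i) := fun i => (hΓ i).of_le h2
  refine ⟨(Curv_vl_hl_eq_zero_iff hΓ2).trans (exists_basic_fiberDeriv_iff hΓ2).symm, ?_⟩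
  intro C hC X Y σ hX hY hσ p
  exact CurvNabla_eq_Curv hΓ2 hC (hX.differentiable (by simp)) (hY.differentiable (by simp))
    (hσ.of_le h2) p
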